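/- arXiv:2511.12450 — 2 statements merged into one kernel-verified Lean document; each statement's English description precedes it below -/
import Mathlib

section
/- Let k, k′ > 0 and λ ∈ ℝ. Let r = (x, y), r′ = (x′, y′) and r_c = (x_c, y_c) be points of ℝ² with |r − r_c| < |r′ − r_c|, y > y′ and y_c > y′, and let (ρ_c, θ_c) be the polar coordinates of r − r_c (so ρ_c = |r − r_c|). Then the series Σ_{n∈ℤ} J_n(kρ_c)·e^{inθ_c}·ω(λ,k)^n·𝓔^{kk′}(x_c − x′, y_c, y′) converges absolutely and its sum equals 𝓔^{kk′}(x − x′, y, y′). -/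
open Complex MeasureTheory Filter

/-- The branch of the vertical wavenumber: κ(λ,k) = √(k²−λ²) if |λ| ≤ k,
and κ(λ,k) = i√(λ²−k²) if |λ| > k. -/
noncomputable def kappa (lam k : ℝ) : ℂ :=
  if |lam| ≤ k then ((Real.sqrt (k ^ 2 - lam ^ 2) : ℝ) : ℂ)
  else Complex.I * ((Real.sqrt (lam ^ 2 - k ^ 2) : ℝ) : ℂ)

/-- ω(λ,k) = (κ(λ,k) + iλ)/k. -/
noncomputable def omega (lam k : ℝ) : ℂ := (kappa lam k + Complex.I * (lam : ℂ)) / (k : ℂ)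

/-- The plane-wave kernel 𝓔^{kk′}(x, y, y′) = exp(iλx + iκ(λ,k)y − iκ(λ,k′)y′). -/
noncomputable def pwKernel (k k' lam x y y' : ℝ) : ℂ :=
  Complex.exp (Complex.I * (lam : ℂ) * (x : ℂ) + Complex.I * kappa lam k * (y : ℂ)
    - Complex.I * kappa lam k' * (y' : ℂ))

/-- Bessel function of the first kind of nonnegative integer order, via its power series. -/
noncomputable def besselJnat (n : ℕ) (z : ℂ) : ℂ :=
  ∑' m : ℕ, ((-1 : ℂ) ^ m / ((m.factorial : ℂ) * ((m + n).factorial : ℂ))) * (z / 2) ^ (2 * m + n)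

/-- Bessel function of the first kind of integer order, with J_{−n} = (−1)^n J_n. -/
noncomputable def besselJ (n : ℤ) (z : ℂ) : ℂ :=
  if 0 ≤ n then besselJnat n.toNat z else (-1 : ℂ) ^ ((-n).toNat) * besselJnat ((-n).toNat) z

def nnEquiv : ℕ × ℕ ≃ ℤ × ℕ where
  toFun p := ((p.1 : ℤ) - (p.2 : ℤ), min p.1 p.2)
  invFun q := if 0 ≤ q.1 then (q.2 + q.1.toNat, q.2) else (q.2, q.2 + (-q.1).toNat)
  left_inv := by rintro ⟨a, b⟩; dsimp; split_ifs with h <;> simp [Prod.ext_iff] <;> omega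
  right_inv := by rintro ⟨n, m⟩; dsimp; split_ifs with h <;> simp [Prod.ext_iff] <;> omega

lemma exp_norm_summable (w : ℂ) : Summable (fun a : ℕ => ‖w ^ a / (a.factorial : ℂ)‖) := by
  refine (Real.summable_pow_div_factorial ‖w‖).congr fun a => ?_
  rw [norm_div, norm_pow]; simp

lemma exp_tsum (w : ℂ) : Complex.exp w = ∑' a : ℕ, w ^ a / (a.factorial : ℂ) := by
  rw [Complex.exp_eq_exp_ℂ, NormedSpace.exp_eq_tsum_div]

section JA
variable (z t : ℂ)

noncomputable def jaF (p : ℕ × ℕ) : ℂ :=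
  (z * t / 2) ^ p.1 / (p.1.factorial : ℂ) * ((-(z / (2 * t))) ^ p.2 / (p.2.factorial : ℂ))

lemma jaF_norm_summable : Summable (fun p : ℕ × ℕ => ‖jaF z t p‖) := by
  refine (Summable.mul_of_nonneg (exp_norm_summable (z * t / 2))
    (exp_norm_summable (-(z / (2 * t)))) (fun _ => norm_nonneg _)
    (fun _ => norm_nonneg _)).congr fun p => ?_
  rw [jaF, norm_mul]

set_option maxHeartbeats 1000000 in
lemma jaF_fiber (ht : t ≠ 0) (n : ℤ) (m : ℕ) :
    jaF z t (nnEquiv.symm (n, m)) =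
      ((-1 : ℂ) ^ m / ((m.factorial : ℂ) * ((m + (if 0 ≤ n then n.toNat else (-n).toNat)).factorial : ℂ)))
        * (z / 2) ^ (2 * m + (if 0 ≤ n then n.toNat else (-n).toNat))
        * (if 0 ≤ n then (1 : ℂ) else (-1) ^ (-n).toNat) * t ^ n := by
  have hneg : -(z / (2 * t)) = (-1 : ℂ) * (z / 2) * t⁻¹ := by field_simp
  by_cases h : 0 ≤ n
  · set N := n.toNat with hN
    have he : nnEquiv.symm (n, m) = (m + N, m) := by simp [nnEquiv, h]; rfl
    have htn : t ^ n = t ^ N := by rw [← zpow_natCast]; congr 1; omega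
    rw [he, htn]; simp only [if_pos h]
    show (z * t / 2) ^ (m + N) / ((m + N).factorial : ℂ) * ((-(z / (2 * t))) ^ m / (m.factorial : ℂ)) = _
    rw [hneg]
    have h1 : (z * t / 2) ^ (m + N) = (z / 2) ^ (m + N) * (t ^ m * t ^ N) := by
      rw [← pow_add, ← mul_pow]; ring_nf
    have h2 : (z / 2) ^ (2 * m + N) = (z / 2) ^ (m + N) * (z / 2) ^ m := by
      rw [← pow_add]; congr 1; omega
    have htm : (t : ℂ) ^ m ≠ 0 := pow_ne_zero _ ht
    have hf1 : ((m + N).factorial : ℂ) ≠ 0 := Nat.cast_ne_zero.mpr (Nat.factorial_ne_zero _)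
    have hf2 : ((m).factorial : ℂ) ≠ 0 := Nat.cast_ne_zero.mpr (Nat.factorial_ne_zero _)
    rw [h1, h2, mul_pow, mul_pow]
    field_simp
    have htinv : t ^ m * t⁻¹ ^ m = 1 := by rw [← mul_pow, mul_inv_cancel₀ ht, one_pow]
    linear_combination (z ^ (m * 2) * z ^ N * (1 / 2) ^ (m * 2) * (1 / 2) ^ N) * htinv
  · set N := (-n).toNat with hN
    have he : nnEquiv.symm (n, m) = (m, m + N) := by simp [nnEquiv, h]; rfl
    have htn : t ^ n = (t ^ N)⁻¹ := by
      have hn' : n = -(N : ℤ) := by omega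
      rw [hn', zpow_neg, zpow_natCast]
    rw [he, htn]; simp only [if_neg h]
    show (z * t / 2) ^ m / ((m).factorial : ℂ) * ((-(z / (2 * t))) ^ (m + N) / ((m + N).factorial : ℂ)) = _
    have htN : t ^ N ≠ 0 := pow_ne_zero _ ht
    refine mul_right_cancel₀ (pow_ne_zero (m + N) ht) ?_
    have k1 : (-(z / (2 * t))) ^ (m + N) * t ^ (m + N) = (-(z / 2)) ^ (m + N) := by
      rw [← mul_pow]; congr 1; field_simp
    have k2 : (t ^ N)⁻¹ * t ^ (m + N) = t ^ m := by
      rw [pow_add, mul_comm (t ^ m) (t ^ N), ← mul_assoc, inv_mul_cancel₀ htN, one_mul]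
    have h1 : (z * t / 2) ^ m = (z / 2) ^ m * t ^ m := by rw [← mul_pow]; try (congr 1; ring)
    have h3 : (-(z / 2) : ℂ) ^ (m + N) = (-1) ^ m * (-1) ^ N * (z / 2) ^ (m + N) := by
      rw [neg_pow, pow_add]; try ring
    have h2 : (z / 2) ^ (2 * m + N) = (z / 2) ^ (m + N) * (z / 2) ^ m := by
      rw [← pow_add]; congr 1; omega
    calc (z * t / 2) ^ m / ((m).factorial : ℂ) * ((-(z / (2 * t))) ^ (m + N) / ((m + N).factorial : ℂ))
          * t ^ (m + N)
        = (z * t / 2) ^ m / ((m).factorial : ℂ) * ((-(z / (2 * t))) ^ (m + N) * t ^ (m + N))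
            / ((m + N).factorial : ℂ) := by ring
      _ = (z / 2) ^ m * t ^ m / ((m).factorial : ℂ) * ((-1) ^ m * (-1) ^ N * (z / 2) ^ (m + N))
            / ((m + N).factorial : ℂ) := by rw [k1, h1, h3]
      _ = ((-1 : ℂ) ^ m / ((m.factorial : ℂ) * ((m + N).factorial : ℂ)) * (z / 2) ^ (2 * m + N)
            * (-1) ^ N) * ((t ^ N)⁻¹ * t ^ (m + N)) := by rw [k2, h2]; ring
      _ = (-1 : ℂ) ^ m / ((m.factorial : ℂ) * ((m + N).factorial : ℂ)) * (z / 2) ^ (2 * m + N)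
            * (-1) ^ N * (t ^ N)⁻¹ * t ^ (m + N) := by ring
end JA

set_option maxHeartbeats 2000000 in
lemma jacobi_anger (z t : ℂ) (ht : t ≠ 0) :
    Summable (fun n : ℤ => ‖besselJ n z * t ^ n‖) ∧
    ∑' n : ℤ, besselJ n z * t ^ n
      = Complex.exp (z * t / 2) * Complex.exp (-(z / (2 * t))) := by
  have hF := jaF_norm_summable z t
  have hFs : Summable (jaF z t) := hF.of_norm
  have hFe : Summable (jaF z t ∘ nnEquiv.symm) :=
    nnEquiv.symm.summable_iff.mpr hFs
  have hFen : Summable ((fun p => ‖jaF z t p‖) ∘ nnEquiv.symm) :=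
    nnEquiv.symm.summable_iff.mpr hF
  have hfiber : ∀ n : ℤ,
      HasSum (fun m : ℕ => jaF z t (nnEquiv.symm (n, m))) (besselJ n z * t ^ n) := by
    intro n
    have hs : Summable (fun m : ℕ => jaF z t (nnEquiv.symm (n, m))) := hFe.prod_factor n
    have key : ∑' m : ℕ, jaF z t (nnEquiv.symm (n, m)) = besselJ n z * t ^ n := by
      rw [tsum_congr (fun m => jaF_fiber z t ht n m)]
      by_cases h : 0 ≤ n
      · simp only [if_pos h]
        rw [tsum_mul_right, tsum_mul_right]
        show besselJnat n.toNat z * 1 * t ^ n = _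
        simp [besselJ, h]
      · simp only [if_neg h]
        rw [tsum_mul_right, tsum_mul_right]
        show besselJnat (-n).toNat z * (-1) ^ (-n).toNat * t ^ n = _
        simp only [besselJ, if_neg h]
        ring
    exact hs.hasSum_iff.mpr key
  have hsum : HasSum (fun n : ℤ => besselJ n z * t ^ n) (∑' p : ℕ × ℕ, jaF z t p) := by
    have h0 : HasSum (jaF z t ∘ nnEquiv.symm) (∑' p, jaF z t p) :=
      (nnEquiv.symm.hasSum_iff).mpr hFs.hasSum
    exact h0.prod_fiberwise hfiber
  constructor
  · have hGsum : HasSum (fun n : ℤ => ∑' m : ℕ, ‖jaF z t (nnEquiv.symm (n, m))‖)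
        (∑' q : ℤ × ℕ, ‖jaF z t (nnEquiv.symm q)‖) :=
      hFen.hasSum.prod_fiberwise (fun n => (hFen.prod_factor n).hasSum)
    refine Summable.of_nonneg_of_le (fun n => norm_nonneg _) (fun n => ?_) hGsum.summable
    rw [← (hfiber n).tsum_eq]
    exact norm_tsum_le_tsum_norm (hFen.prod_factor n)
  · rw [hsum.tsum_eq, exp_tsum, exp_tsum,
      tsum_mul_tsum_of_summable_norm (exp_norm_summable _) (exp_norm_summable _)]
    rfl

lemma kappa_sq (lam k : ℝ) (hk : 0 < k) : kappa lam k ^ 2 = (k : ℂ) ^ 2 - (lam : ℂ) ^ 2 := by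
  unfold kappa
  split_ifs with h
  · rw [← Complex.ofReal_pow, Real.sq_sqrt (by nlinarith [abs_nonneg lam, _root_.sq_abs lam] : (0:ℝ) ≤ k ^ 2 - lam ^ 2)]
    push_cast; ring
  · push_neg at h
    rw [mul_pow, Complex.I_sq, ← Complex.ofReal_pow,
      Real.sq_sqrt (by nlinarith [abs_nonneg lam, _root_.sq_abs lam] : (0:ℝ) ≤ lam ^ 2 - k ^ 2)]
    push_cast; ring

lemma omega_mul (lam k : ℝ) (hk : 0 < k) :
    omega lam k * ((kappa lam k - Complex.I * (lam : ℂ)) / (k : ℂ)) = 1 := by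
  have hκ := kappa_sq lam k hk
  have hk0 : (k : ℂ) ≠ 0 := Complex.ofReal_ne_zero.mpr hk.ne'
  have hI : (Complex.I) ^ 2 = -1 := Complex.I_sq
  unfold omega
  field_simp
  linear_combination hκ - (lam : ℂ) ^ 2 * hI

lemma omega_ne_zero (lam k : ℝ) (hk : 0 < k) : omega lam k ≠ 0 :=
  left_ne_zero_of_mul_eq_one (omega_mul lam k hk)

/-- multipole-type expansion of the plane-wave kernel. For
|r − r_c| < |r′ − r_c|, y > y′, y_c > y′, with (ρ_c, θ_c) the polar coordinates of r − r_c,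
the series Σ_{n∈ℤ} J_n(kρ_c) e^{inθ_c} ω(λ,k)^n 𝓔^{kk′}(x_c − x′, y_c, y′) converges
absolutely with sum 𝓔^{kk′}(x − x′, y, y′). -/
theorem pwKernel_multipole_expansion
    (k k' lam : ℝ) (hk : 0 < k) (hk' : 0 < k')
    (x y x' y' xc yc ρc θc : ℝ)
    (hρc : 0 ≤ ρc)
    (hxc : x - xc = ρc * Real.cos θc) (hyc : y - yc = ρc * Real.sin θc)
    (hsep : Real.sqrt ((x - xc) ^ 2 + (y - yc) ^ 2)
      < Real.sqrt ((x' - xc) ^ 2 + (y' - yc) ^ 2))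
    (hyy' : y > y') (hycy' : yc > y') :
    Summable (fun n : ℤ =>
      ‖besselJ n ((k * ρc : ℝ) : ℂ) * Complex.exp (Complex.I * (n : ℂ) * (θc : ℂ))
        * (omega lam k) ^ n * pwKernel k k' lam (xc - x') yc y'‖) ∧
    (∑' n : ℤ, besselJ n ((k * ρc : ℝ) : ℂ) * Complex.exp (Complex.I * (n : ℂ) * (θc : ℂ))
        * (omega lam k) ^ n * pwKernel k k' lam (xc - x') yc y')
      = pwKernel k k' lam (x - x') y y' := by
  have hk0 : (k : ℂ) ≠ 0 := Complex.ofReal_ne_zero.mpr hk.ne'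
  set E1 : ℂ := Complex.exp (Complex.I * (θc : ℂ)) with hE1
  set t : ℂ := E1 * omega lam k with htdef
  have ht : t ≠ 0 := mul_ne_zero (Complex.exp_ne_zero _) (omega_ne_zero lam k hk)
  set z : ℂ := ((k * ρc : ℝ) : ℂ) with hz
  set P : ℂ := pwKernel k k' lam (xc - x') yc y' with hP
  have hterm : ∀ n : ℤ,
      besselJ n z * Complex.exp (Complex.I * (n : ℂ) * (θc : ℂ)) * (omega lam k) ^ n * P
      = besselJ n z * t ^ n * P := by
    intro n
    have h1 : Complex.I * (n : ℂ) * (θc : ℂ) = (n : ℂ) * (Complex.I * (θc : ℂ)) := by ring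
    rw [h1, Complex.exp_int_mul, htdef, mul_zpow]
    ring
  obtain ⟨hsummable, hsum⟩ := jacobi_anger z t ht
  have hc : (Real.cos θc : ℂ) ^ 2 + (Real.sin θc : ℂ) ^ 2 = 1 := by
    push_cast
    exact Complex.cos_sq_add_sin_sq _
  have hE1' : E1 = (Real.cos θc : ℂ) + (Real.sin θc : ℂ) * Complex.I := by
    rw [hE1, mul_comm, Complex.exp_mul_I, ← Complex.ofReal_cos, ← Complex.ofReal_sin]
  have hinv : t * (((Real.cos θc : ℂ) - (Real.sin θc : ℂ) * Complex.I)
      * ((kappa lam k - Complex.I * (lam : ℂ)) / (k : ℂ))) = 1 := by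
    rw [htdef, hE1']
    calc (((Real.cos θc : ℂ) + (Real.sin θc : ℂ) * Complex.I) * omega lam k)
          * (((Real.cos θc : ℂ) - (Real.sin θc : ℂ) * Complex.I)
            * ((kappa lam k - Complex.I * (lam : ℂ)) / (k : ℂ)))
        = (((Real.cos θc : ℂ) + (Real.sin θc : ℂ) * Complex.I)
            * ((Real.cos θc : ℂ) - (Real.sin θc : ℂ) * Complex.I))
          * (omega lam k * ((kappa lam k - Complex.I * (lam : ℂ)) / (k : ℂ))) := by ring
      _ = ((Real.cos θc : ℂ) + (Real.sin θc : ℂ) * Complex.I)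
            * ((Real.cos θc : ℂ) - (Real.sin θc : ℂ) * Complex.I) := by
          rw [omega_mul lam k hk, mul_one]
      _ = 1 := by linear_combination hc - (Real.sin θc : ℂ) ^ 2 * Complex.I_sq
  have htinv : t⁻¹ = ((Real.cos θc : ℂ) - (Real.sin θc : ℂ) * Complex.I)
      * ((kappa lam k - Complex.I * (lam : ℂ)) / (k : ℂ)) :=
    (eq_inv_of_mul_eq_one_right hinv).symm
  constructor
  · refine (hsummable.mul_right ‖P‖).congr fun n => ?_
    rw [hterm n]
    exact (norm_mul _ _).symm
  · calc (∑' n : ℤ, besselJ n z * Complex.exp (Complex.I * (n : ℂ) * (θc : ℂ))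
          * (omega lam k) ^ n * P)
        = ∑' n : ℤ, besselJ n z * t ^ n * P := tsum_congr fun n => hterm n
      _ = (∑' n : ℤ, besselJ n z * t ^ n) * P := tsum_mul_right
      _ = Complex.exp (z * t / 2) * Complex.exp (-(z / (2 * t))) * P := by rw [hsum]
      _ = pwKernel k k' lam (x - x') y y' := ?_
    rw [hP]
    unfold pwKernel
    rw [← Complex.exp_add, ← Complex.exp_add]
    congr 1
    have hzdiv : z / (2 * t) = z * t⁻¹ / 2 := by
      rw [div_eq_mul_inv, mul_inv]; ring
    have hzz : z = (k : ℂ) * (ρc : ℂ) := by rw [hz]; push_cast; ring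
    have hxq : (x : ℂ) = (xc : ℂ) + (ρc : ℂ) * (Real.cos θc : ℂ) := by
      have h0 : x = xc + ρc * Real.cos θc := by linarith
      push_cast [h0]; ring
    have hyq : (y : ℂ) = (yc : ℂ) + (ρc : ℂ) * (Real.sin θc : ℂ) := by
      have h0 : y = yc + ρc * Real.sin θc := by linarith
      push_cast [h0]; ring
    rw [hzdiv, htinv, htdef, hE1', hzz]
    push_cast
    rw [hxq, hyq]
    unfold omega
    field_simp
    push_cast
    ring
end

section
/- Let k′ > 0, let r_j′ = (x_j′, y_j′) (1 ≤ j ≤ M_s) be points of ℝ² with strengths Q_j′ ∈ ℂ, and let c′ and c̃′ be two expansion centers with r_j′ ≠ c′, r_j′ ≠ c̃′ and c′ ≠ c̃′. Let (ρ_j′, θ_j′), (ρ̃_j′, θ̃_j′) and (ρ_c′, θ_c′) be the polar coordinates of r_j′ − c′, r_j′ − c̃′ and c′ − c̃′, respectively. Define α_m = Σ_{j=1}^{M_s} Q_j′·J_m(k′ρ_j′)·e^{imθ_j′} and α̃_n = Σ_{j=1}^{M_s} Q_j′·J_n(k′ρ̃_j′)·e^{inθ̃_j′}. Then for every n ∈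 ℤ the multipole-to-multipole (M2M) shifting identity holds: α̃_n = Σ_{m∈ℤ} J_{n−m}(k′ρ_c′)·e^{i(n−m)θ_c′}·α_m, the series converging absolutely. -/
open Complex

/-! ### Auxiliary definitions -/

noncomputable def ecoef (u : ℂ) (p : ℕ) : ℂ := u ^ p / p.factorial

noncomputable def bcoef (u v : ℂ) (pq : ℕ × ℕ) : ℂ :=
  ecoef u pq.1 * ((-1 : ℂ) ^ pq.2 * ecoef v pq.2)

def fib (m : ℤ) (a : ℕ) : ℕ × ℕ := (a + m.toNat, a + (-m).toNat)

noncomputable def Bfun (m : ℤ) (u v : ℂ) : ℂ := ∑' a : ℕ, bcoef u v (fib m a)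

noncomputable def Hfun (n : ℤ) (u1 v1 u2 v2 : ℂ) (e : ℤ × (ℕ × ℕ)) : ℂ :=
  bcoef u2 v2 (fib (n - e.1) e.2.1) * bcoef u1 v1 (fib e.1 e.2.2)

def kap (n : ℤ) (e : ℤ × (ℕ × ℕ)) : ℕ :=
  (e.2.1 + (n - e.1).toNat) + (e.2.2 + e.1.toNat) - n.toNat

noncomputable def Wfun (u1 v1 u2 v2 : ℂ) (p q : ℕ) (s : ℕ × ℕ) : ℂ :=
  if s.1 ≤ p ∧ s.2 ≤ q then bcoef u1 v1 s * bcoef u2 v2 (p - s.1, q - s.2) else 0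

def imap (n : ℤ) (p : ℕ) (s : ℕ × ℕ) : ℤ × (ℕ × ℕ) :=
  ((s.1 : ℤ) - s.2, ((p - s.1) - (n - ((s.1 : ℤ) - s.2)).toNat, s.1 - ((s.1 : ℤ) - s.2).toNat))

/-! ### Summability of the coefficients -/

lemma norm_ecoef (u : ℂ) (p : ℕ) : ‖ecoef u p‖ = ‖u‖ ^ p / p.factorial := by
  rw [ecoef, norm_div, norm_pow, Complex.norm_natCast]

lemma summable_norm_bcoef (u v : ℂ) : Summable (fun pq : ℕ × ℕ => ‖bcoef u v pq‖) := by
  have h1 : Summable (fun p : ℕ => ‖ecoef u p‖) :=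
    (Real.summable_pow_div_factorial ‖u‖).congr fun p => (norm_ecoef u p).symm
  have h2 : Summable (fun q : ℕ => ‖(-1 : ℂ) ^ q * ecoef v q‖) :=
    (Real.summable_pow_div_factorial ‖v‖).congr fun q => by
      rw [norm_mul, norm_pow, norm_neg, norm_one, one_pow, one_mul, norm_ecoef]
  exact Summable.mul_norm (f := fun p => ecoef u p)
    (g := fun q => (-1 : ℂ) ^ q * ecoef v q) h1 h2

lemma fib_inj (m : ℤ) : Function.Injective (fib m) := by
  intro a b h
  simp only [fib, Prod.mk.injEq] at h
  omega

lemma summable_norm_bcoef_fib (u v : ℂ) (m : ℤ) :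
    Summable (fun a : ℕ => ‖bcoef u v (fib m a)‖) :=
  (summable_norm_bcoef u v).comp_injective (fib_inj m)

/-! ### Series representation of `besselJ n r · e^{inθ}` -/

lemma besselJ_eq_Bfun (n : ℤ) (r θ : ℝ) :
    besselJ n (r : ℂ) * Complex.exp (Complex.I * (n : ℂ) * (θ : ℂ))
      = Bfun n ((r : ℂ) / 2 * Complex.exp ((θ : ℂ) * Complex.I))
          ((r : ℂ) / 2 * Complex.exp (-(θ : ℂ) * Complex.I)) := by
  rcases le_or_gt 0 n with hn | hn
  · have hN0 : (-n).toNat = 0 := by omega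
    rw [besselJ, if_pos hn, besselJnat, Bfun, ← tsum_mul_right]
    refine tsum_congr fun a => ?_
    simp only [fib, bcoef, ecoef, hN0, mul_pow, add_zero]
    have hexp : Complex.exp ((θ : ℂ) * Complex.I) ^ (a + n.toNat)
        * Complex.exp (-(θ : ℂ) * Complex.I) ^ a
        = Complex.exp (Complex.I * (n : ℂ) * (θ : ℂ)) := by
      rw [← Complex.exp_nat_mul, ← Complex.exp_nat_mul, ← Complex.exp_add]
      congr 1
      have h : ((n.toNat : ℕ) : ℂ) = (n : ℂ) := by exact_mod_cast Int.toNat_of_nonneg hn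
      push_cast [h]
      ring
    rw [← hexp]
    ring
  · have hN0 : n.toNat = 0 := by omega
    rw [besselJ, if_neg (not_le.mpr hn), besselJnat, Bfun, mul_assoc, ← tsum_mul_right,
      ← tsum_mul_left]
    refine tsum_congr fun a => ?_
    simp only [fib, bcoef, ecoef, hN0, mul_pow, add_zero]
    have hexp : Complex.exp ((θ : ℂ) * Complex.I) ^ a
        * Complex.exp (-(θ : ℂ) * Complex.I) ^ (a + (-n).toNat)
        = Complex.exp (Complex.I * (n : ℂ) * (θ : ℂ)) := by
      rw [← Complex.exp_nat_mul, ← Complex.exp_nat_mul, ← Complex.exp_add]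
      congr 1
      have h : (((-n).toNat : ℕ) : ℂ) = -(n : ℂ) := by
        exact_mod_cast Int.toNat_of_nonneg (by omega : (0:ℤ) ≤ -n)
      push_cast [h]
      ring
    rw [← hexp]
    ring

/-! ### Binomial identities -/

lemma ecoef_add (w1 w2 : ℂ) (p : ℕ) :
    ∑ p1 ∈ Finset.range (p + 1), ecoef w1 p1 * ecoef w2 (p - p1) = ecoef (w1 + w2) p := by
  rw [ecoef, add_pow, Finset.sum_div]
  refine Finset.sum_congr rfl fun p1 hp1 => ?_
  have hle : p1 ≤ p := Nat.lt_succ_iff.mp (Finset.mem_range.mp hp1)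
  have key : ((p.choose p1 : ℂ)) * p1.factorial * (p - p1).factorial = p.factorial := by
    exact_mod_cast congrArg (Nat.cast (R := ℂ)) (Nat.choose_mul_factorial_mul_factorial hle)
  have h1 : (p1.factorial : ℂ) ≠ 0 := Nat.cast_ne_zero.mpr p1.factorial_ne_zero
  have h2 : ((p - p1).factorial : ℂ) ≠ 0 := Nat.cast_ne_zero.mpr (p - p1).factorial_ne_zero
  have h3 : (p.factorial : ℂ) ≠ 0 := Nat.cast_ne_zero.mpr p.factorial_ne_zero
  rw [ecoef, ecoef, div_mul_div_comm, div_eq_div_iff (mul_ne_zero h1 h2) h3]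
  linear_combination (-(w1 ^ p1 * w2 ^ (p - p1))) * key

lemma bcoef_add (u1 v1 u2 v2 : ℂ) (p q : ℕ) :
    ∑ p1 ∈ Finset.range (p + 1), ∑ q1 ∈ Finset.range (q + 1),
        bcoef u1 v1 (p1, q1) * bcoef u2 v2 (p - p1, q - q1)
      = bcoef (u1 + u2) (v1 + v2) (p, q) := by
  have h : ∀ p1 q1 : ℕ, bcoef u1 v1 (p1, q1) * bcoef u2 v2 (p - p1, q - q1)
      = (ecoef u1 p1 * ecoef u2 (p - p1)) *
        ((-1 : ℂ) ^ q1 * ((-1 : ℂ) ^ (q - q1) * (ecoef v1 q1 * ecoef v2 (q - q1)))) := by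
    intro p1 q1; simp only [bcoef]; ring
  calc ∑ p1 ∈ Finset.range (p + 1), ∑ q1 ∈ Finset.range (q + 1),
        bcoef u1 v1 (p1, q1) * bcoef u2 v2 (p - p1, q - q1)
      = (∑ p1 ∈ Finset.range (p + 1), ecoef u1 p1 * ecoef u2 (p - p1)) *
        ∑ q1 ∈ Finset.range (q + 1),
          (-1 : ℂ) ^ q1 * ((-1 : ℂ) ^ (q - q1) * (ecoef v1 q1 * ecoef v2 (q - q1))) := by
        rw [Finset.sum_mul_sum]
        exact Finset.sum_congr rfl fun p1 _ => Finset.sum_congr rfl fun q1 _ => h p1 q1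
    _ = bcoef (u1 + u2) (v1 + v2) (p, q) := by
        rw [bcoef]
        have hsgn : ∑ q1 ∈ Finset.range (q + 1),
            (-1 : ℂ) ^ q1 * ((-1 : ℂ) ^ (q - q1) * (ecoef v1 q1 * ecoef v2 (q - q1)))
            = (-1 : ℂ) ^ q * ∑ q1 ∈ Finset.range (q + 1), ecoef v1 q1 * ecoef v2 (q - q1) := by
          rw [Finset.mul_sum]
          refine Finset.sum_congr rfl fun q1 hq1 => ?_
          have hle : q1 ≤ q := Nat.lt_succ_iff.mp (Finset.mem_range.mp hq1)
          have hpow : (-1 : ℂ) ^ q1 * (-1 : ℂ) ^ (q - q1) = (-1 : ℂ) ^ q := by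
            rw [← pow_add, Nat.add_sub_cancel' hle]
          linear_combination ecoef v1 q1 * ecoef v2 (q - q1) * hpow
        rw [hsgn, ecoef_add, ecoef_add]

/-! ### Regrouping along the fibers of `kap` -/

lemma imap_mem (n : ℤ) (c : ℕ) (s : ℕ × ℕ)
    (h1 : s.1 ≤ c + n.toNat) (h2 : s.2 ≤ c + (-n).toNat) :
    kap n (imap n (c + n.toNat) s) = c := by
  obtain ⟨p1, q1⟩ := s
  simp only [imap, kap] at *
  omega

lemma imap_inj (n : ℤ) (p : ℕ) (s t : ℕ × ℕ)
    (hs : s.1 ≤ p) (ht : t.1 ≤ p) (h : imap n p s = imap n p t) : s = t := by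
  obtain ⟨a, b⟩ := s; obtain ⟨a', b'⟩ := t
  simp only [imap, Prod.mk.injEq] at h ⊢
  omega

lemma fiber_sum (n : ℤ) (u1 v1 u2 v2 : ℂ) (c : ℕ) :
    ∑' x : kap n ⁻¹' {c}, Hfun n u1 v1 u2 v2 x
      = bcoef (u1 + u2) (v1 + v2) (fib n c) := by
  set p := c + n.toNat with hp
  set q := c + (-n).toNat with hq
  have hsupp : ∀ s : ℕ × ℕ, Wfun u1 v1 u2 v2 p q s ≠ 0 → s.1 ≤ p ∧ s.2 ≤ q := by
    intro s h
    by_contra hc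
    exact h (if_neg hc)
  have step1 : ∑' x : kap n ⁻¹' {c}, Hfun n u1 v1 u2 v2 x
      = ∑' s : ℕ × ℕ, Wfun u1 v1 u2 v2 p q s := by
    refine tsum_eq_tsum_of_ne_zero_bij
      (fun s => ⟨imap n p s.1, by
        have hb := hsupp s.1 s.2
        simp only [Set.mem_preimage, Set.mem_singleton_iff]
        exact imap_mem n c s.1 hb.1 hb.2⟩) ?_ ?_ ?_
    · intro x y hxy
      have hvals : imap n p x.1 = imap n p y.1 := congrArg Subtype.val hxy
      exact Subtype.ext (imap_inj n p x.1 y.1 (hsupp x.1 x.2).1 (hsupp y.1 y.2).1 hvals)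
    · rintro ⟨⟨m, a, b⟩, hx⟩ hHx
      simp only [Set.mem_preimage, Set.mem_singleton_iff, kap] at hx
      refine ⟨⟨(b + m.toNat, b + (-m).toNat), ?_⟩, ?_⟩
      · have hcond : b + m.toNat ≤ p ∧ b + (-m).toNat ≤ q := by omega
        have hWx : Wfun u1 v1 u2 v2 p q (b + m.toNat, b + (-m).toNat)
            = bcoef u1 v1 (fib m b) * bcoef u2 v2 (fib (n - m) a) := by
          rw [Wfun, if_pos hcond,
            show (p - (b + m.toNat), q - (b + (-m).toNat)) = fib (n - m) a by
              simp only [fib, Prod.mk.injEq]; omega]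
          rfl
        simp only [Function.mem_support, hWx]
        simp only [Function.mem_support, ne_eq] at hHx
        intro h0
        exact hHx (by rw [Hfun]; simpa [mul_comm] using h0)
      · apply Subtype.ext
        simp only [imap, Prod.mk.injEq]
        refine ⟨by omega, by omega, by omega⟩
    · rintro ⟨⟨p1, q1⟩, hs⟩
      have hb := hsupp (p1, q1) hs
      simp only at hb
      have e1 : fib ((p1 : ℤ) - q1) (p1 - ((p1 : ℤ) - q1).toNat) = (p1, q1) := by
        simp only [fib, Prod.mk.injEq]; omega
      have e2 : fib (n - ((p1 : ℤ) - q1)) ((p - p1) - (n - ((p1 : ℤ) - q1)).toNat)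
          = (p - p1, q - q1) := by
        simp only [fib, Prod.mk.injEq]; omega
      simp only [Hfun, imap]
      rw [e1, e2, Wfun, if_pos ⟨hb.1, hb.2⟩]
      ring
  rw [step1]
  have step2 : ∑' s : ℕ × ℕ, Wfun u1 v1 u2 v2 p q s
      = ∑ s ∈ Finset.range (p + 1) ×ˢ Finset.range (q + 1), Wfun u1 v1 u2 v2 p q s := by
    refine tsum_eq_sum ?_
    intro s hs
    apply if_neg
    simp only [Finset.mem_product, Finset.mem_range] at hs
    omega
  rw [step2, Finset.sum_product]
  have hfib : fib n c = (p, q) := by simp only [fib, hp, hq]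
  rw [hfib]
  calc ∑ p1 ∈ Finset.range (p + 1), ∑ q1 ∈ Finset.range (q + 1), Wfun u1 v1 u2 v2 p q (p1, q1)
      = ∑ p1 ∈ Finset.range (p + 1), ∑ q1 ∈ Finset.range (q + 1),
          bcoef u1 v1 (p1, q1) * bcoef u2 v2 (p - p1, q - q1) := by
        refine Finset.sum_congr rfl fun p1 hp1 => Finset.sum_congr rfl fun q1 hq1 => ?_
        simp only [Finset.mem_range] at hp1 hq1
        exact if_pos ⟨by omega, by omega⟩
    _ = bcoef (u1 + u2) (v1 + v2) (p, q) := bcoef_add u1 v1 u2 v2 p q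

/-! ### The addition theorem for the coefficient functions -/

lemma summable_norm_Hfun (n : ℤ) (u1 v1 u2 v2 : ℂ) :
    Summable (fun e : ℤ × (ℕ × ℕ) => ‖Hfun n u1 v1 u2 v2 e‖) := by
  have hD : Summable (fun P : (ℕ × ℕ) × (ℕ × ℕ) =>
      ‖bcoef u2 v2 P.1‖ * ‖bcoef u1 v1 P.2‖) :=
    Summable.mul_of_nonneg (f := fun s => ‖bcoef u2 v2 s‖) (g := fun s => ‖bcoef u1 v1 s‖)
      (summable_norm_bcoef u2 v2) (summable_norm_bcoef u1 v1)
      (fun _ => norm_nonneg _) (fun _ => norm_nonneg _)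
  have hinj : Function.Injective
      (fun e : ℤ × (ℕ × ℕ) => ((fib (n - e.1) e.2.1, fib e.1 e.2.2) : (ℕ × ℕ) × (ℕ × ℕ))) := by
    rintro ⟨m, a, b⟩ ⟨m', a', b'⟩ h
    simp only [fib, Prod.mk.injEq] at h
    simp only [Prod.mk.injEq]
    omega
  exact (hD.comp_injective hinj).congr fun e => (norm_mul _ _).symm

lemma Bfun_mul_eq (n m : ℤ) (u1 v1 u2 v2 : ℂ) :
    Bfun (n - m) u2 v2 * Bfun m u1 v1 = ∑' ab : ℕ × ℕ, Hfun n u1 v1 u2 v2 (m, ab) :=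
  tsum_mul_tsum_of_summable_norm
    (f := fun a => bcoef u2 v2 (fib (n - m) a)) (g := fun b => bcoef u1 v1 (fib m b))
    (summable_norm_bcoef_fib u2 v2 (n - m)) (summable_norm_bcoef_fib u1 v1 m)

lemma Bfun_addition (n : ℤ) (u1 v1 u2 v2 : ℂ) :
    Summable (fun m : ℤ => ‖Bfun (n - m) u2 v2 * Bfun m u1 v1‖) ∧
      ∑' m : ℤ, Bfun (n - m) u2 v2 * Bfun m u1 v1 = Bfun n (u1 + u2) (v1 + v2) := by
  have hHn := summable_norm_Hfun n u1 v1 u2 v2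
  have hH : Summable (Hfun n u1 v1 u2 v2) := hHn.of_norm
  constructor
  · refine Summable.of_nonneg_of_le (fun m => norm_nonneg _) (fun m => ?_) hHn.prod
    rw [Bfun_mul_eq]
    exact norm_tsum_le_tsum_norm (hHn.prod_factor m)
  · calc ∑' m : ℤ, Bfun (n - m) u2 v2 * Bfun m u1 v1
        = ∑' (m : ℤ) (ab : ℕ × ℕ), Hfun n u1 v1 u2 v2 (m, ab) :=
          tsum_congr fun m => Bfun_mul_eq n m u1 v1 u2 v2
      _ = ∑' e : ℤ × (ℕ × ℕ), Hfun n u1 v1 u2 v2 e := (Summable.tsum_prod hH).symm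
      _ = ∑' c : ℕ, ∑' x : kap n ⁻¹' {c}, Hfun n u1 v1 u2 v2 x :=
          (hH.hasSum.tsum_fiberwise (kap n)).tsum_eq.symm
      _ = Bfun n (u1 + u2) (v1 + v2) := tsum_congr fun c => fiber_sum n u1 v1 u2 v2 c

/-! ### Vector addition in the scaled polar form -/

lemma cexp_comb (k ρ1 θ1 ρ2 θ2 ρ3 θ3 : ℝ)
    (hx : ρ1 * Real.cos θ1 + ρ2 * Real.cos θ2 = ρ3 * Real.cos θ3)
    (hy : ρ1 * Real.sin θ1 + ρ2 * Real.sin θ2 = ρ3 * Real.sin θ3) :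
    ((k * ρ1 : ℝ) : ℂ) / 2 * Complex.exp ((θ1 : ℂ) * Complex.I)
      + ((k * ρ2 : ℝ) : ℂ) / 2 * Complex.exp ((θ2 : ℂ) * Complex.I)
      = ((k * ρ3 : ℝ) : ℂ) / 2 * Complex.exp ((θ3 : ℂ) * Complex.I) := by
  have hx' : (ρ1 : ℂ) * Complex.cos (θ1 : ℂ) + (ρ2 : ℂ) * Complex.cos (θ2 : ℂ)
      = (ρ3 : ℂ) * Complex.cos (θ3 : ℂ) := by exact_mod_cast hx
  have hy' : (ρ1 : ℂ) * Complex.sin (θ1 : ℂ) + (ρ2 : ℂ) * Complex.sin (θ2 : ℂ)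
      = (ρ3 : ℂ) * Complex.sin (θ3 : ℂ) := by exact_mod_cast hy
  rw [Complex.exp_mul_I, Complex.exp_mul_I, Complex.exp_mul_I]
  push_cast
  linear_combination ((k : ℂ) / 2) * hx' + ((k : ℂ) / 2) * Complex.I * hy'

lemma cexp_comb_neg (k ρ1 θ1 ρ2 θ2 ρ3 θ3 : ℝ)
    (hx : ρ1 * Real.cos θ1 + ρ2 * Real.cos θ2 = ρ3 * Real.cos θ3)
    (hy : ρ1 * Real.sin θ1 + ρ2 * Real.sin θ2 = ρ3 * Real.sin θ3) :
    ((k * ρ1 : ℝ) : ℂ) / 2 * Complex.exp (-(θ1 : ℂ) * Complex.I)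
      + ((k * ρ2 : ℝ) : ℂ) / 2 * Complex.exp (-(θ2 : ℂ) * Complex.I)
      = ((k * ρ3 : ℝ) : ℂ) / 2 * Complex.exp (-(θ3 : ℂ) * Complex.I) := by
  have := cexp_comb k ρ1 (-θ1) ρ2 (-θ2) ρ3 (-θ3)
    (by simpa [Real.cos_neg] using hx)
    (by simp only [Real.sin_neg]; linarith)
  simpa [Complex.ofReal_neg] using this

/-- multipole-to-multipole (M2M) shift. -/
theorem multipole_to_multipole_shift
    (k' : ℝ) (hk' : 0 < k')
    (Ms : ℕ) (Q : Fin Ms → ℂ) (x' y' ρ' θ' ρt' θt' : Fin Ms → ℝ)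
    (xc' yc' xct' yct' ρc' θc' : ℝ)
    (hne : ∀ j, (x' j, y' j) ≠ (xc', yc'))
    (hnet : ∀ j, (x' j, y' j) ≠ (xct', yct'))
    (hcc : (xc', yc') ≠ (xct', yct'))
    (hρ' : ∀ j, 0 ≤ ρ' j)
    (hx' : ∀ j, x' j - xc' = ρ' j * Real.cos (θ' j))
    (hy' : ∀ j, y' j - yc' = ρ' j * Real.sin (θ' j))
    (hρt' : ∀ j, 0 ≤ ρt' j)
    (hxt' : ∀ j, x' j - xct' = ρt' j * Real.cos (θt' j))
    (hyt' : ∀ j, y' j - yct' = ρt' j * Real.sin (θt' j))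
    (hρc' : 0 ≤ ρc')
    (hxcc : xc' - xct' = ρc' * Real.cos θc')
    (hycc : yc' - yct' = ρc' * Real.sin θc') :
    ∀ n : ℤ,
      Summable (fun m : ℤ =>
        ‖besselJ (n - m) ((k' * ρc' : ℝ) : ℂ)
          * Complex.exp (Complex.I * ((n - m : ℤ) : ℂ) * (θc' : ℂ))
          * (∑ j, Q j * besselJ m ((k' * ρ' j : ℝ) : ℂ)
              * Complex.exp (Complex.I * (m : ℂ) * (θ' j : ℂ)))‖) ∧
      (∑' m : ℤ, besselJ (n - m) ((k' * ρc' : ℝ) : ℂ)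
          * Complex.exp (Complex.I * ((n - m : ℤ) : ℂ) * (θc' : ℂ))
          * (∑ j, Q j * besselJ m ((k' * ρ' j : ℝ) : ℂ)
              * Complex.exp (Complex.I * (m : ℂ) * (θ' j : ℂ))))
        = ∑ j, Q j * besselJ n ((k' * ρt' j : ℝ) : ℂ)
            * Complex.exp (Complex.I * (n : ℂ) * (θt' j : ℂ)) := by
  intro n
  -- scaled polar vectors
  set u2 : ℂ := ((k' * ρc' : ℝ) : ℂ) / 2 * Complex.exp ((θc' : ℂ) * Complex.I) with hu2
  set v2 : ℂ := ((k' * ρc' : ℝ) : ℂ) / 2 * Complex.exp (-(θc' : ℂ) * Complex.I) with hv2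
  set u1 : Fin Ms → ℂ := fun j =>
    ((k' * ρ' j : ℝ) : ℂ) / 2 * Complex.exp (((θ' j : ℝ) : ℂ) * Complex.I) with hu1
  set v1 : Fin Ms → ℂ := fun j =>
    ((k' * ρ' j : ℝ) : ℂ) / 2 * Complex.exp (-((θ' j : ℝ) : ℂ) * Complex.I) with hv1
  have addj := fun j : Fin Ms => Bfun_addition n (u1 j) (v1 j) u2 v2
  have hc2 : ∀ m : ℤ,
      besselJ (n - m) ((k' * ρc' : ℝ) : ℂ)
        * Complex.exp (Complex.I * ((n - m : ℤ) : ℂ) * (θc' : ℂ))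
        = Bfun (n - m) u2 v2 := fun m => besselJ_eq_Bfun (n - m) (k' * ρc') θc'
  have hB1 : ∀ (m : ℤ) (j : Fin Ms),
      besselJ m ((k' * ρ' j : ℝ) : ℂ) * Complex.exp (Complex.I * (m : ℂ) * ((θ' j : ℝ) : ℂ))
        = Bfun m (u1 j) (v1 j) := fun m j => besselJ_eq_Bfun m (k' * ρ' j) (θ' j)
  -- the product rewritten through the coefficient functions
  have hform : ∀ m : ℤ,
      besselJ (n - m) ((k' * ρc' : ℝ) : ℂ)
          * Complex.exp (Complex.I * ((n - m : ℤ) : ℂ) * (θc' : ℂ))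
          * (∑ j, Q j * besselJ m ((k' * ρ' j : ℝ) : ℂ)
              * Complex.exp (Complex.I * (m : ℂ) * (θ' j : ℂ)))
        = ∑ j, Q j * (Bfun (n - m) u2 v2 * Bfun m (u1 j) (v1 j)) := by
    intro m
    rw [Finset.mul_sum]
    refine Finset.sum_congr rfl fun j _ => ?_
    have h1 := hB1 m j
    have h2 := hc2 m
    linear_combination (Q j * (besselJ (n - m) ((k' * ρc' : ℝ) : ℂ)
        * Complex.exp (Complex.I * ((n - m : ℤ) : ℂ) * (θc' : ℂ)))) * h1
      + (Q j * Bfun m (u1 j) (v1 j)) * h2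
  -- geometric addition of the centers
  have hUadd : ∀ j, u1 j + u2
      = ((k' * ρt' j : ℝ) : ℂ) / 2 * Complex.exp (((θt' j : ℝ) : ℂ) * Complex.I) := by
    intro j
    exact cexp_comb k' (ρ' j) (θ' j) ρc' θc' (ρt' j) (θt' j)
      (by have := hx' j; have := hxcc; have := hxt' j; linarith)
      (by have := hy' j; have := hycc; have := hyt' j; linarith)
  have hVadd : ∀ j, v1 j + v2
      = ((k' * ρt' j : ℝ) : ℂ) / 2 * Complex.exp (-((θt' j : ℝ) : ℂ) * Complex.I) := by
    intro j
    exact cexp_comb_neg k' (ρ' j) (θ' j) ρc' θc' (ρt' j) (θt' j)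
      (by have := hx' j; have := hxcc; have := hxt' j; linarith)
      (by have := hy' j; have := hycc; have := hyt' j; linarith)
  constructor
  · -- summability
    refine Summable.of_nonneg_of_le
      (f := fun m : ℤ => ∑ j : Fin Ms, ‖Q j‖ * ‖Bfun (n - m) u2 v2 * Bfun m (u1 j) (v1 j)‖)
      (fun m => norm_nonneg _) (fun m => ?_)
      (summable_sum fun j _ => ((addj j).1).mul_left ‖Q j‖)
    rw [hform m]
    refine le_trans (norm_sum_le _ _) (le_of_eq (Finset.sum_congr rfl fun j _ => ?_))
    exact norm_mul _ _
  · -- the identity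
    calc (∑' m : ℤ, besselJ (n - m) ((k' * ρc' : ℝ) : ℂ)
          * Complex.exp (Complex.I * ((n - m : ℤ) : ℂ) * (θc' : ℂ))
          * (∑ j, Q j * besselJ m ((k' * ρ' j : ℝ) : ℂ)
              * Complex.exp (Complex.I * (m : ℂ) * (θ' j : ℂ))))
        = ∑' m : ℤ, ∑ j, Q j * (Bfun (n - m) u2 v2 * Bfun m (u1 j) (v1 j)) :=
          tsum_congr hform
      _ = ∑ j, ∑' m : ℤ, Q j * (Bfun (n - m) u2 v2 * Bfun m (u1 j) (v1 j)) :=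
          Summable.tsum_finsetSum fun j _ => ((addj j).1.of_norm).mul_left (Q j)
      _ = ∑ j, Q j * ∑' m : ℤ, Bfun (n - m) u2 v2 * Bfun m (u1 j) (v1 j) :=
          Finset.sum_congr rfl fun j _ => tsum_mul_left
      _ = ∑ j, Q j * besselJ n ((k' * ρt' j : ℝ) : ℂ)
            * Complex.exp (Complex.I * (n : ℂ) * (θt' j : ℂ)) := by
          refine Finset.sum_congr rfl fun j _ => ?_
          rw [(addj j).2, hUadd j, hVadd j, ← besselJ_eq_Bfun n (k' * ρt' j) (θt' j)]
          ring
end
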